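/- If type A is positively □-free and B <: A, then B is positively □-free; dually, if A is negatively □-free and A <: B, then B is negatively □-free. -/

import Mathlib

/-- Aspects of RSLR: modal □ (`box`) and non-modal ■ (`bbox`). -/
inductive Aspect | box | bbox
deriving DecidableEq, Repr

/-- Ordering on aspects: □ <: □, □ <: ■, ■ <: ■. -/
inductive AspectSub : Aspect → Aspect → Prop
  | refl (a : Aspect) : AspectSub a a
  | boxLe : AspectSub .box .bbox

/-- RSLR types: A ::= N | aA → A. -/
inductive Ty
  | N
  | arr (a : Aspect) (A B : Ty)
deriving DecidableEq, Repr

/-- Subtyping on RSLR types. -/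
inductive TySub : Ty → Ty → Prop
  | refl (A : Ty) : TySub A A
  | trans {A B C} : TySub A B → TySub B C → TySub A C
  | arr {A B C D : Ty} {a b : Aspect} :
      TySub B A → TySub C D → AspectSub b a → TySub (.arr a A C) (.arr b B D)

mutual
  /-- Positively □-free types. -/
  def posFree : Ty → Prop
    | .N => True
    | .arr .box _ _ => False
    | .arr .bbox A B => negFree A ∧ posFree B
  /-- Negatively □-free types. -/
  def negFree : Ty → Prop
    | .N => True
    | .arr _ A B => posFree A ∧ negFree B
end

/-- A type is □-free when the modal aspect □ occurs nowhere in it. -/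
def tyBoxFree : Ty → Prop
  | .N => True
  | .arr a A B => a = .bbox ∧ tyBoxFree A ∧ tyBoxFree B

/-- Terms of RSLR (with named variables). -/
inductive Term
  | var (x : ℕ)
  | num (n : ℕ)
  | s0 | s1 | pred | rand
  | app (t s : Term)
  | lam (x : ℕ) (a : Aspect) (A : Ty) (t : Term)
  | case_ (A : Ty) (t s r q : Term)
  | rec_ (A : Ty) (t s r : Term)
deriving DecidableEq, Repr

/-- Substitution of `u` for the variable `x` in `t`. -/
def subst (t : Term) (x : ℕ) (u : Term) : Term :=
  match t with
  | .var y => if y = x then u else .var y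
  | .num n => .num n
  | .s0 => .s0
  | .s1 => .s1
  | .pred => .pred
  | .rand => .rand
  | .app a b => .app (subst a x u) (subst b x u)
  | .lam y a A b => if y = x then .lam y a A b else .lam y a A (subst b x u)
  | .case_ A a b c d => .case_ A (subst a x u) (subst b x u) (subst c x u) (subst d x u)
  | .rec_ A a b c => .rec_ A (subst a x u) (subst b x u) (subst c x u)

/-- Free variables of a term. -/
def fv : Term → List ℕ
  | .var x => [x]
  | .app a b => fv a ++ fv b
  | .lam x _ _ b => (fv b).filter (· ≠ x)
  | .case_ _ a b c d => fv a ++ fv b ++ fv c ++ fv d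
  | .rec_ _ a b c => fv a ++ fv b ++ fv c
  | _ => []

def Closed (t : Term) : Prop := fv t = []

/-- Explicit terms contain no recursion. -/
def Explicit : Term → Prop
  | .rec_ _ _ _ _ => False
  | .app a b => Explicit a ∧ Explicit b
  | .lam _ _ _ b => Explicit b
  | .case_ _ a b c d => Explicit a ∧ Explicit b ∧ Explicit c ∧ Explicit d
  | _ => True

/-- Contexts: finite lists of (variable, aspect, type) assignments. -/
abbrev Ctx := List (ℕ × Aspect × Ty)

/-- All assignments in the context are of base type N. -/
def baseCtx (Γ : Ctx) : Prop := ∀ e ∈ Γ, e.2.2 = Ty.N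

/-- Every aspect in the context is below `a` (Γ <: a). -/
def ctxLe (Γ : Ctx) (a : Aspect) : Prop := ∀ e ∈ Γ, AspectSub e.2.1 a

/-- The type ■N → N of the constants S₀, S₁, P. -/
def nmArrNN : Ty := .arr .bbox .N .N

/-- RSLR typing. A judgment `Γ; Δ ⊢ t : A` of the paper (with Γ base-typed)
is rendered as `HasType (Γ ++ Δ) t A` together with `baseCtx Γ` side conditions
where splitting matters. -/
inductive HasType : Ctx → Term → Ty → Prop
  | var {Γ : Ctx} {x a A} : (x, a, A) ∈ Γ → HasType Γ (.var x) A
  | num {Γ n} : HasType Γ (.num n) .N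
  | s0 {Γ} : HasType Γ .s0 nmArrNN
  | s1 {Γ} : HasType Γ .s1 nmArrNN
  | pred {Γ} : HasType Γ .pred nmArrNN
  | rand {Γ} : HasType Γ .rand .N
  | sub {Γ t A B} : HasType Γ t A → TySub A B → HasType Γ t B
  | lam {Γ x a A B t} : HasType ((x, a, A) :: Γ) t B →
      HasType Γ (.lam x a A t) (.arr a A B)
  | case_ {Γ Δ₁ Δ₂ Δ₃ Δ₄ : Ctx} {t s r q A} :
      baseCtx Γ →
      HasType (Γ ++ Δ₁) t .N →
      HasType (Γ ++ Δ₂) s A →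
      HasType (Γ ++ Δ₃) r A →
      HasType (Γ ++ Δ₄) q A →
      tyBoxFree A →
      HasType (Γ ++ Δ₁ ++ Δ₂ ++ Δ₃ ++ Δ₄) (.case_ A t s r q) A
  | rec_ {Γ₁ Γ₂ Δ₁ Δ₂ : Ctx} {t s r A} :
      baseCtx Γ₁ → baseCtx Γ₂ →
      HasType (Γ₁ ++ Δ₁) t .N →
      HasType (Γ₁ ++ Γ₂ ++ Δ₂) s A →
      HasType (Γ₁ ++ Γ₂) r (.arr .box .N (.arr .bbox A A)) →
      ctxLe (Γ₁ ++ Δ₁) .box →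
      tyBoxFree A →
      HasType (Γ₁ ++ Γ₂ ++ Δ₁ ++ Δ₂) (.rec_ A t s r) A
  | app {Γ Δ₁ Δ₂ : Ctx} {t s a A B} :
      baseCtx Γ →
      HasType (Γ ++ Δ₁) t (.arr a A B) →
      HasType (Γ ++ Δ₂) s A →
      ctxLe (Γ ++ Δ₂) a →
      HasType (Γ ++ Δ₁ ++ Δ₂) (.app t s) B

/-- Probabilistic one-step reduction: a term reduces to a sequence of terms,
each with equal probability. -/
inductive Step : Term → List Term → Prop
  | caseZero {A z e o} : Step (.case_ A (.num 0) z e o) [z]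
  | caseEven {A n z e o} : Step (.case_ A (.num (2 * (n + 1))) z e o) [e]
  | caseOdd {A n z e o} : Step (.case_ A (.num (2 * n + 1)) z e o) [o]
  | recZero {A g f} : Step (.rec_ A (.num 0) g f) [g]
  | recSucc {A n g f} : Step (.rec_ A (.num (n + 1)) g f)
      [.app (.app f (.num (n + 1))) (.rec_ A (.num ((n + 1) / 2)) g f)]
  | succ0 {n} : Step (.app .s0 (.num n)) [.num (2 * n)]
  | succ1 {n} : Step (.app .s1 (.num n)) [.num (2 * n + 1)]
  | predStep {n} : Step (.app .pred (.num n)) [.num (n / 2)]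
  | betaN {x a t n} : Step (.app (.lam x a .N t) (.num n)) [subst t x (.num n)]
  | betaH {x a b A B t s} : Step (.app (.lam x a (.arr b A B) t) s) [subst t x s]
  | swap {x a A t s r} :
      Step (.app (.app (.lam x a A t) s) r) [.app (.lam x a A (.app t r)) s]
  | randStep : Step .rand [.num 0, .num 1]
  | appL {t s l} : Step t l → Step (.app t s) (l.map fun t' => .app t' s)
  | appR {t s l} : Step s l → Step (.app t s) (l.map fun s' => .app t s')
  | lamC {x a A t l} : Step t l → Step (.lam x a A t) (l.map fun t' => .lam x a A t')
  | caseT {A t s r q l} : Step t l →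
      Step (.case_ A t s r q) (l.map fun t' => .case_ A t' s r q)
  | caseS {A t s r q l} : Step s l →
      Step (.case_ A t s r q) (l.map fun s' => .case_ A t s' r q)
  | caseR {A t s r q l} : Step r l →
      Step (.case_ A t s r q) (l.map fun r' => .case_ A t s r' q)
  | caseQ {A t s r q l} : Step q l →
      Step (.case_ A t s r q) (l.map fun q' => .case_ A t s r q')
  | recT {A t s r l} : Step t l →
      Step (.rec_ A t s r) (l.map fun t' => .rec_ A t' s r)

def NormalForm (t : Term) : Prop := ∀ l, ¬ Step t l

/-- The Dirac distribution on a term. -/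
noncomputable def dirac (t : Term) : Term → ℝ := fun s => if s = t then 1 else 0

/-- Multistep reduction to a distribution over normal forms. -/
inductive MStep : Term → (Term → ℝ) → Prop
  | nf {t} : NormalForm t → MStep t (dirac t)
  | step {t : Term} {ts : List Term} {Ds : List (Term → ℝ)} :
      Step t ts → ts.length = Ds.length →
      (∀ p ∈ ts.zip Ds, MStep p.1 p.2) →
      MStep t (fun s => ((Ds.map fun D => D s).sum) / (ts.length : ℝ))

/-- The relaxed multistep reduction relation ⇒, indexed by derivation size. -/
inductive MStepR : ℕ → Term → (Term → ℝ) → Prop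
  | ax (t : Term) : MStepR 0 t (dirac t)
  | step {t : Term} {ts : List Term} {Ds : List (Term → ℝ)} {ks : List ℕ} :
      Step t ts → ts.length = Ds.length → Ds.length = ks.length →
      (∀ p ∈ ts.zip (Ds.zip ks), MStepR p.2.2 p.1 p.2.1) →
      MStepR (ks.foldr max 0 + 1) t (fun s => ((Ds.map fun D => D s).sum) / (ts.length : ℝ))

/-- Size of a numeral: ⌈log₂ n⌉, taken to be at least 1. -/
def numSize (n : ℕ) : ℕ := max (Nat.clog 2 n) 1

/-- Size of a term, numerals having logarithmic size. -/
def tsize : Term → ℕ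
  | .var _ => 1
  | .num n => numSize n
  | .s0 => 1 | .s1 => 1 | .pred => 1 | .rand => 1
  | .app a b => tsize a + tsize b
  | .lam _ _ _ b => tsize b + 1
  | .case_ _ a b c d => tsize a + tsize b + tsize c + tsize d + 1
  | .rec_ _ a b c => tsize a + tsize b + tsize c + 1

/-- Size of a term counting every numeral as 1. -/
def wsize : Term → ℕ
  | .var _ => 1
  | .num _ => 1
  | .s0 => 1 | .s1 => 1 | .pred => 1 | .rand => 1
  | .app a b => wsize a + wsize b
  | .lam _ _ _ b => wsize b + 1
  | .case_ _ a b c d => wsize a + wsize b + wsize c + wsize d + 1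
  | .rec_ _ a b c => wsize a + wsize b + wsize c + 1

/-- Maximum size of a numeral occurring in a term (0 if none). -/
def nsize : Term → ℕ
  | .num n => numSize n
  | .app a b => max (nsize a) (nsize b)
  | .lam _ _ _ b => nsize b
  | .case_ _ a b c d => max (max (nsize a) (nsize b)) (max (nsize c) (nsize d))
  | .rec_ _ a b c => max (nsize a) (max (nsize b) (nsize c))
  | _ => 0

/-- Iterated application `t u₁ … u_k`. -/
def appL (t : Term) (us : List Term) : Term := us.foldl Term.app t

def IsConst : Term → Prop := fun c =>
  (∃ n, c = .num n) ∨ c = .s0 ∨ c = .s1 ∨ c = .pred ∨ c = .rand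

/-- Big-step normal-form evaluation ⇓_nf for explicit closed terms of type N,
indexed by probability, result numeral, derivation size, and the list of terms
occurring in the derivation. -/
inductive Nf : Term → ℝ → ℕ → ℕ → List Term → Prop
  | num {n} : Nf (.num n) 1 n 1 [.num n]
  | rand0 : Nf .rand (1/2) 0 1 [.rand]
  | rand1 : Nf .rand (1/2) 1 1 [.rand]
  | succ0 {t α n k l} : Nf t α n k l →
      Nf (.app .s0 t) α (2 * n) (k + 1) (.app .s0 t :: l)
  | succ1 {t α n k l} : Nf t α n k l →
      Nf (.app .s1 t) α (2 * n + 1) (k + 1) (.app .s1 t :: l)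
  | pred0 {t α k l} : Nf t α 0 k l →
      Nf (.app .pred t) α 0 (k + 1) (.app .pred t :: l)
  | predS {t α n k l} : Nf t α n k l → 1 ≤ n →
      Nf (.app .pred t) α (n / 2) (k + 1) (.app .pred t :: l)
  | caseZ {A t s r q us α β m k₁ k₂ l₁ l₂} :
      Nf t α 0 k₁ l₁ → Nf (appL s us) β m k₂ l₂ →
      Nf (appL (.case_ A t s r q) us) (α * β) m (k₁ + k₂ + 1)
        (appL (.case_ A t s r q) us :: l₁ ++ l₂)
  | caseE {A t s r q us α β n m k₁ k₂ l₁ l₂} :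
      Nf t α (2 * n) k₁ l₁ → 1 ≤ n → Nf (appL r us) β m k₂ l₂ →
      Nf (appL (.case_ A t s r q) us) (α * β) m (k₁ + k₂ + 1)
        (appL (.case_ A t s r q) us :: l₁ ++ l₂)
  | caseO {A t s r q us α β n m k₁ k₂ l₁ l₂} :
      Nf t α (2 * n + 1) k₁ l₁ → Nf (appL q us) β m k₂ l₂ →
      Nf (appL (.case_ A t s r q) us) (α * β) m (k₁ + k₂ + 1)
        (appL (.case_ A t s r q) us :: l₁ ++ l₂)
  | betaN {x a t s rs α β n m k₁ k₂ l₁ l₂} :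
      Nf s α n k₁ l₁ → Nf (appL (subst t x (.num n)) rs) β m k₂ l₂ →
      Nf (appL (.app (.lam x a .N t) s) rs) (α * β) m (k₁ + k₂ + 1)
        (appL (.app (.lam x a .N t) s) rs :: l₁ ++ l₂)
  | betaH {x a b A B t s rs β n k l} :
      Nf (appL (subst t x s) rs) β n k l →
      Nf (appL (.app (.lam x a (.arr b A B) t) s) rs) β n (k + 1)
        (appL (.app (.lam x a (.arr b A B) t) s) rs :: l)

/-- Recursion-elimination evaluation ⇓_rf, indexed by probability, result term,
derivation size, and the terms occurring in the derivation. -/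
inductive Rf : Term → ℝ → Term → ℕ → List Term → Prop
  | const {c} : IsConst c → Rf c 1 c 1 [c]
  | succ0 {t α v k l} : Rf t α v k l →
      Rf (.app .s0 t) α (.app .s0 v) (k + 1) (.app .s0 t :: l)
  | succ1 {t α v k l} : Rf t α v k l →
      Rf (.app .s1 t) α (.app .s1 v) (k + 1) (.app .s1 t :: l)
  | predC {t α v k l} : Rf t α v k l →
      Rf (.app .pred t) α (.app .pred v) (k + 1) (.app .pred t :: l)
  | caseC {A t s r q α β γ δ v z a b kt ks kr kq lt ls lr lq}
      {us cs : List Term} {εs : List ℝ} {kus : List ℕ} {lus : List (List Term)} :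
      Rf t α v kt lt → Rf s β z ks ls → Rf r γ a kr lr → Rf q δ b kq lq →
      us.length = εs.length → εs.length = cs.length →
      cs.length = kus.length → kus.length = lus.length →
      (∀ p ∈ us.zip (εs.zip (cs.zip (kus.zip lus))),
        Rf p.1 p.2.1 p.2.2.1 p.2.2.2.1 p.2.2.2.2) →
      Rf (appL (.case_ A t s r q) us) (α * β * γ * δ * εs.prod)
        (appL (.case_ A v z a b) cs) (kt + ks + kr + kq + kus.sum + 1)
        (appL (.case_ A t s r q) us :: lt ++ ls ++ lr ++ lq ++ lus.flatten)
  | recC {A t s r α β γ v z n kt kn ks lt ln ls}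
      {qs bs : List Term} {δs : List ℝ} {kqs : List ℕ} {lqs : List (List Term)}
      {rres : List Term} {γs : List ℝ} {krs : List ℕ} {lrs : List (List Term)} :
      Rf t α v kt lt →
      Nf v β n kn ln →
      Rf s γ z ks ls →
      qs.length = δs.length → δs.length = bs.length →
      bs.length = kqs.length → kqs.length = lqs.length →
      (∀ p ∈ qs.zip (δs.zip (bs.zip (kqs.zip lqs))),
        Rf p.1 p.2.1 p.2.2.1 p.2.2.2.1 p.2.2.2.2) →
      rres.length = Nat.size n → rres.length = γs.length →
      γs.length = krs.length → krs.length = lrs.length →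
      (∀ p ∈ (List.range (Nat.size n)).zip (γs.zip (rres.zip (krs.zip lrs))),
        Rf (.app r (.num (n / 2 ^ p.1))) p.2.1 p.2.2.1 p.2.2.2.1 p.2.2.2.2) →
      Rf (appL (.rec_ A t s r) qs) (α * β * γ * γs.prod * δs.prod)
        (appL (rres.foldr Term.app z) bs) (kt + kn + ks + kqs.sum + krs.sum + 1)
        (appL (.rec_ A t s r) qs :: lt ++ ln ++ ls ++ lqs.flatten ++ lrs.flatten)
  | betaBox {x t s rs α β γ z n u k₁ k₂ k₃ l₁ l₂ l₃} :
      Rf s α z k₁ l₁ → Nf z γ n k₂ l₂ →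
      Rf (appL (subst t x (.num n)) rs) β u k₃ l₃ →
      Rf (appL (.app (.lam x .box .N t) s) rs) (α * γ * β) u (k₁ + k₂ + k₃ + 1)
        (appL (.app (.lam x .box .N t) s) rs :: l₁ ++ l₂ ++ l₃)
  | betaBBox {x t s rs α β γ z n u k₁ k₂ k₃ l₁ l₂ l₃} :
      Rf s α z k₁ l₁ → Nf z γ n k₂ l₂ →
      Rf (appL t rs) β u k₃ l₃ →
      Rf (appL (.app (.lam x .bbox .N t) s) rs) (α * γ * β)
        (.app (.lam x .bbox .N u) (.num n)) (k₁ + k₂ + k₃ + 1)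
        (appL (.app (.lam x .bbox .N t) s) rs :: l₁ ++ l₂ ++ l₃)
  | betaH {x a b A B t s rs β u k l} :
      Rf (appL (subst t x s) rs) β u k l →
      Rf (appL (.app (.lam x a (.arr b A B) t) s) rs) β u (k + 1)
        (appL (.app (.lam x a (.arr b A B) t) s) rs :: l)
  | lamC {x a A t β u k l} :
      Rf t β u k l →
      Rf (.lam x a A t) β (.lam x a A u) (k + 1) (.lam x a A t :: l)
  | varC {x} {ts ss : List Term} {αs : List ℝ} {ks : List ℕ} {ls : List (List Term)} :
      ts.length = αs.length → αs.length = ss.length →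
      ss.length = ks.length → ks.length = ls.length →
      (∀ p ∈ ts.zip (αs.zip (ss.zip (ks.zip ls))),
        Rf p.1 p.2.1 p.2.2.1 p.2.2.2.1 p.2.2.2.2) →
      Rf (appL (.var x) ts) αs.prod (appL (.var x) ss) (ks.sum + 1)
        (appL (.var x) ts :: ls.flatten)

/-- First-order types a₁N → … → a_kN → N. -/
def FOty : ℕ → Ty → Prop
  | 0, .N => True
  | k + 1, .arr _ .N B => FOty k B
  | _, _ => False

/-- First-order terms of a given arity: closed, well-typed terms of
type a₁N → … → a_kN → N. -/
def IsFirstOrder (t : Term) (k : ℕ) : Prop :=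
  Closed t ∧ ∃ A, HasType [] t A ∧ FOty k A

/-! Both halves are proved together by induction on the subtyping derivation, since the arrow rule
is contravariant in the domain and so swaps the two polarities. Aspects can only grow towards a
subtype, so an arrow below a ■-arrow is again a ■-arrow. -/

theorem AspectSub.eq_bbox {a : Aspect} (h : AspectSub .bbox a) : a = .bbox := by
  cases h; rfl

theorem posFree_arr_iff {a : Aspect} {A B : Ty} :
    posFree (.arr a A B) ↔ a = .bbox ∧ negFree A ∧ posFree B := by
  cases a <;> simp [posFree]

theorem negFree_arr_iff {a : Aspect} {A B : Ty} :
    negFree (.arr a A B) ↔ posFree A ∧ negFree B := by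
  cases a <;> rfl

theorem posFree_anti_and_negFree_mono {A B : Ty} (h : TySub A B) :
    (posFree B → posFree A) ∧ (negFree A → negFree B) := by
  induction h with
  | refl => exact ⟨id, id⟩
  | trans _ _ ih₁ ih₂ => exact ⟨ih₁.1 ∘ ih₂.1, ih₂.2 ∘ ih₁.2⟩
  | arr _ _ hba ihDom ihCod =>
    simp only [posFree_arr_iff, negFree_arr_iff]
    refine ⟨?_, fun ⟨hA, hC⟩ => ⟨ihDom.1 hA, ihCod.2 hC⟩⟩
    rintro ⟨rfl, hB, hD⟩
    exact ⟨hba.eq_bbox, ihDom.2 hB, ihCod.1 hD⟩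

/-- positive □-freeness is downward closed and negative
□-freeness is upward closed along subtyping. -/
theorem boxFree_subtyping :
    (∀ A B : Ty, posFree A → TySub B A → posFree B) ∧
    (∀ A B : Ty, negFree A → TySub A B → negFree B) :=
  ⟨fun _ _ hA h => (posFree_anti_and_negFree_mono h).1 hA,
    fun _ _ hA h => (posFree_anti_and_negFree_mono h).2 hA⟩
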